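/- arXiv:2201.04103 — 2 statements merged into one kernel-verified Lean document; each statement's English description precedes it below -/
import Mathlib

section
/- Let M be a number field such that M/ℚ is a Galois extension with solvable Galois group G = Gal(M/ℚ), and let K and L be intermediate fields of M/ℚ with [K:ℚ] = [L:ℚ] = p a prime, whose fixing subgroups Gal(M/K) and Gal(M/L) are Sylow-conjugate in G. Then K and L are isomorphic as fields. -/
/-- Two subgroups of `G` are conjugate if one is mapped onto the other by
conjugation by some element of `G`. -/
def Subgroup.IsConjugate {G : Type*} [Group G] (U V : Subgroup G) : Prop :=
  ∃ g : G, Subgroup.map (MulAut.conj g).toMonoidHom U = V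

/-- Two subgroups `U, V` of `G` are Sylow-conjugate if for every prime `p` there are
Sylow `p`-subgroups of `U` and of `V` which, viewed as subgroups of `G`,
are conjugate in `G`. -/
def Subgroup.SylowConjugate {G : Type*} [Group G] (U V : Subgroup G) : Prop :=
  ∀ p : ℕ, p.Prime → ∃ (P : Sylow p U) (Q : Sylow p V),
    Subgroup.IsConjugate ((P : Subgroup U).map U.subtype) ((Q : Subgroup V).map V.subtype)

section Helpers

variable {G : Type*} [Group G]

lemma conj_comp_eq (g h : G) :
    (MulAut.conj g).toMonoidHom.comp (MulAut.conj h).toMonoidHom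
      = (MulAut.conj (g * h)).toMonoidHom := by
  ext x
  simp [mul_assoc]

lemma map_conj_map_conj (g h : G) (U : Subgroup G) :
    Subgroup.map (MulAut.conj g).toMonoidHom (Subgroup.map (MulAut.conj h).toMonoidHom U)
      = Subgroup.map (MulAut.conj (g * h)).toMonoidHom U := by
  rw [Subgroup.map_map, conj_comp_eq]

lemma map_conj_one (U : Subgroup G) :
    Subgroup.map (MulAut.conj (1 : G)).toMonoidHom U = U := by
  ext x
  simp [Subgroup.mem_map]

lemma map_conj_normal (A : Subgroup G) [hA : A.Normal] (g : G) :
    Subgroup.map (MulAut.conj g).toMonoidHom A = A := by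
  ext x
  simp only [Subgroup.mem_map, MulEquiv.coe_toMonoidHom, MulAut.conj_apply]
  constructor
  · rintro ⟨y, hy, rfl⟩; exact hA.conj_mem y hy g
  · intro hx; exact ⟨g⁻¹ * x * g, by simpa using hA.conj_mem x hx g⁻¹, by group⟩

lemma isConjugate_symm {U V : Subgroup G} (h : U.IsConjugate V) : V.IsConjugate U := by
  obtain ⟨g, hg⟩ := h
  exact ⟨g⁻¹, by rw [← hg, map_conj_map_conj, inv_mul_cancel, map_conj_one]⟩

lemma sylowConjugate_symm {U V : Subgroup G} (h : U.SylowConjugate V) :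
    V.SylowConjugate U := fun p hp => by
  obtain ⟨P, Q, hc⟩ := h p hp
  exact ⟨Q, P, isConjugate_symm hc⟩

lemma map_map_conj_comm {H : Type*} [Group H] (f : G →* H) (g : G) (X : Subgroup G) :
    Subgroup.map (MulAut.conj (f g)).toMonoidHom (X.map f)
      = (Subgroup.map (MulAut.conj g).toMonoidHom X).map f := by
  rw [Subgroup.map_map, Subgroup.map_map]
  congr 1
  ext x
  simp

end Helpers

lemma my_conj_pow {G : Type*} [Group G] (g x : G) (n : ℕ) :
    (g * x * g⁻¹) ^ n = g * x ^ n * g⁻¹ := by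
  simpa [MulAut.conj_apply] using (map_pow (MulAut.conj g) x n).symm

set_option maxHeartbeats 1000000 in
lemma conj_complement {G : Type*} [Group G] [Finite G] {p : ℕ} (hp : p.Prime)
    (A U V P : Subgroup G) [hAn : A.Normal]
    (hAcard : Nat.card A = p)
    (hAcomm : ∀ x ∈ A, ∀ y ∈ A, x * y = y * x)
    (hAV : A ⊓ V = ⊥)
    (hUi : U.index = p) (hVi : V.index = p)
    (hPU : P ≤ U) (hPV : P ≤ V)
    (hm : ¬ p ∣ P.relIndex U) :
    ∃ a ∈ A, Subgroup.map (MulAut.conj a).toMonoidHom U = V := by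
  haveI : Fact p.Prime := ⟨hp⟩
  haveI : Fact (1 < p) := ⟨hp.one_lt⟩
  have hp0 : p ≠ 0 := hp.pos.ne'
  have hUV : Nat.card U = Nat.card V := by
    have h1 := U.card_mul_index
    have h2 := V.card_mul_index
    rw [hUi] at h1; rw [hVi] at h2
    exact Nat.eq_of_mul_eq_mul_right hp.pos (h1.trans h2.symm)
  have hsup : A ⊔ V = ⊤ := by
    have hdvd : (A ⊔ V).index ∣ p := hVi ▸ Subgroup.index_dvd_of_le le_sup_right
    rcases hp.eq_one_or_self_of_dvd _ hdvd with h1 | h1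
    · exact Subgroup.index_eq_one.mp h1
    · exfalso
      have hVsup : V = A ⊔ V := by
        apply Subgroup.eq_of_le_of_card_ge le_sup_right
        have e1 := (A ⊔ V).card_mul_index
        have e2 := V.card_mul_index
        rw [h1] at e1; rw [hVi] at e2
        exact le_of_eq (Nat.eq_of_mul_eq_mul_right hp.pos (e1.trans e2.symm))
      have hAV' : A ≤ V := hVsup ▸ le_sup_left
      have hb : A = ⊥ := by rw [← hAV, inf_of_le_left hAV']
      rw [hb, Subgroup.card_bot] at hAcard
      have := hp.one_lt; omega
  obtain ⟨z₀, hz₀⟩ : ∃ z : ↥A, orderOf z = p := by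
    haveI : Fintype ↥A := Fintype.ofFinite _
    exact exists_prime_orderOf_dvd_card p (by rw [← Nat.card_eq_fintype_card, hAcard])
  set z : G := (z₀ : G) with hz
  have hzA : z ∈ A := z₀.2
  have hzord : orderOf z = p := by
    rw [← hz₀]; exact orderOf_injective A.subtype A.subtype_injective z₀
  set zp : ZMod p → G := fun m => z ^ m.val with hzp
  have hzp_mem : ∀ m, zp m ∈ A := fun m => pow_mem hzA _
  have hval_cast : ∀ m : ZMod p, ((m.val : ℕ) : ZMod p) = m := fun m => ZMod.natCast_zmod_val m
  have hzp_natCast : ∀ k : ℕ, zp (k : ZMod p) = z ^ k := by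
    intro k
    show z ^ (ZMod.val (k : ZMod p)) = z ^ k
    rw [ZMod.val_natCast]
    calc z ^ (k % p) = z ^ (k % orderOf z) := by rw [hzord]
    _ = z ^ k := pow_mod_orderOf z k
  have hzp_add : ∀ m n : ZMod p, zp (m + n) = zp m * zp n := by
    intro m n
    rw [← hval_cast m, ← hval_cast n, ← Nat.cast_add, hzp_natCast, hzp_natCast, hzp_natCast,
      pow_add]
  have hzp_zero : zp 0 = 1 := by
    show z ^ (0 : ZMod p).val = 1
    rw [ZMod.val_zero, pow_zero]
  have hzp_inv : ∀ m, (zp m)⁻¹ = zp (-m) := by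
    intro m
    have h1 : zp m * zp (-m) = 1 := by rw [← hzp_add, add_neg_cancel, hzp_zero]
    exact inv_eq_of_mul_eq_one_right h1
  have hzp_inj : Function.Injective zp := by
    intro m n hmn
    have h1 : z ^ m.val = z ^ n.val := hmn
    rw [pow_eq_pow_iff_modEq, hzord] at h1
    have h2 : m.val = n.val := by
      unfold Nat.ModEq at h1
      rwa [Nat.mod_eq_of_lt (ZMod.val_lt m), Nat.mod_eq_of_lt (ZMod.val_lt n)] at h1
    rw [← hval_cast m, ← hval_cast n, h2]
  have hA_rep : ∀ a ∈ A, ∃ m, a = zp m := by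
    intro a ha
    have hz_top : Subgroup.zpowers z₀ = (⊤ : Subgroup ↥A) :=
      Subgroup.eq_top_of_le_card _ (by rw [Nat.card_zpowers, hz₀, hAcard])
    have hmem : (⟨a, ha⟩ : ↥A) ∈ Subgroup.zpowers z₀ := hz_top ▸ Subgroup.mem_top _
    obtain ⟨k, hk⟩ := hmem
    have hk' : z ^ k = a := by
      have := congrArg (A.subtype) hk
      simpa using this
    have hnn : (0:ℤ) ≤ k % p := Int.emod_nonneg k (by exact_mod_cast hp0)
    refine ⟨(((k % (p : ℤ)).toNat : ℕ) : ZMod p), ?_⟩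
    rw [hzp_natCast, ← zpow_natCast, Int.toNat_of_nonneg hnn, ← hk']
    rw [show ((p:ℤ)) = ((orderOf z : ℕ) : ℤ) by rw [hzord], zpow_mod_orderOf]
  -- the character χ
  have hχex : ∀ g : G, ∃ m, g * z * g⁻¹ = zp m := fun g =>
    hA_rep _ (hAn.conj_mem z hzA g)
  choose χ hχ using hχex
  have hχ_pow : ∀ (g : G) (m : ZMod p), g * zp m * g⁻¹ = zp (χ g * m) := by
    intro g m
    have h1 : g * zp m * g⁻¹ = (g * z * g⁻¹) ^ m.val := by rw [my_conj_pow]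
    rw [h1, hχ g]
    show (z ^ (χ g).val) ^ m.val = zp (χ g * m)
    calc (z ^ (χ g).val) ^ m.val = z ^ ((χ g).val * m.val) := (pow_mul z _ _).symm
    _ = zp (((χ g).val * m.val : ℕ) : ZMod p) := (hzp_natCast _).symm
    _ = zp (χ g * m) := by rw [Nat.cast_mul, hval_cast, hval_cast]
  have hχ_mul : ∀ g h : G, χ (g * h) = χ g * χ h := by
    intro g h
    apply hzp_inj
    rw [← hχ (g*h)]
    have h2 : (g*h) * z * (g*h)⁻¹ = g * (h * z * h⁻¹) * g⁻¹ := by group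
    rw [h2, hχ h, hχ_pow]
  have hχ_A : ∀ a ∈ A, χ a = 1 := by
    intro a ha
    apply hzp_inj
    rw [← hχ a]
    have h1 : a * z * a⁻¹ = z := by
      rw [hAcomm a ha z hzA]; group
    rw [h1]
    show z = z ^ (1 : ZMod p).val
    rw [ZMod.val_one, pow_one]
  -- decomposition g = zp (e g) * w g with w g ∈ V
  have hdec : ∀ g : G, ∃ mw : ZMod p × G, mw.2 ∈ V ∧ g = zp mw.1 * mw.2 := by
    intro g
    have hg : g ∈ (↑(A ⊔ V) : Set G) := by rw [hsup]; trivial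
    rw [Subgroup.normal_mul] at hg
    obtain ⟨a, ha, u, hu, huw⟩ := hg
    obtain ⟨m, rfl⟩ := hA_rep a ha
    exact ⟨(m, u), hu, huw.symm⟩
  choose mw hmw using hdec
  set e : G → ZMod p := fun g => (mw g).1 with he
  set w : G → G := fun g => (mw g).2 with hwdef
  have hwV : ∀ g, w g ∈ V := fun g => (hmw g).1
  have hgdec : ∀ g : G, g = zp (e g) * w g := fun g => (hmw g).2
  have huniq : ∀ (m m' : ZMod p) (u u' : G), u ∈ V → u' ∈ V →
      zp m * u = zp m' * u' → m = m' ∧ u = u' := by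
    intro m m' u u' hu hu' heq
    have h1 : (zp m')⁻¹ * zp m = u' * u⁻¹ := by
      calc (zp m')⁻¹ * zp m = (zp m')⁻¹ * (zp m * u) * u⁻¹ := by group
      _ = (zp m')⁻¹ * (zp m' * u') * u⁻¹ := by rw [heq]
      _ = u' * u⁻¹ := by group
    have h2 : zp (-m' + m) = u' * u⁻¹ := by rw [hzp_add, ← hzp_inv, h1]
    have h3 : zp (-m' + m) ∈ A ⊓ V :=
      Subgroup.mem_inf.mpr ⟨hzp_mem _, by rw [h2]; exact mul_mem hu' (inv_mem hu)⟩
    rw [hAV, Subgroup.mem_bot] at h3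
    have hm' : -m' + m = 0 := hzp_inj (by rw [h3, hzp_zero])
    have hmm : m = m' := by linear_combination hm'
    refine ⟨hmm, ?_⟩
    subst hmm
    exact mul_left_cancel heq
  have he_V : ∀ u ∈ V, e u = 0 := by
    intro u hu
    have h1 : zp (e u) * w u = zp 0 * u := by rw [← hgdec u, hzp_zero, one_mul]
    exact (huniq _ _ _ _ (hwV u) hu h1).1
  have hχw : ∀ g : G, χ (w g) = χ g := by
    intro g
    conv_rhs => rw [hgdec g]
    rw [hχ_mul, hχ_A _ (hzp_mem _), one_mul]
  have he_mul : ∀ g h : G, e (g * h) = e g + χ g * e h := by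
    intro g h
    have hgh : zp (e (g*h)) * w (g*h) = zp (e g + χ g * e h) * (w g * w h) := by
      rw [← hgdec (g*h), hzp_add]
      calc g * h = (zp (e g) * w g) * (zp (e h) * w h) := by rw [← hgdec g, ← hgdec h]
      _ = zp (e g) * (w g * zp (e h) * (w g)⁻¹) * (w g * w h) := by group
      _ = zp (e g) * zp (χ (w g) * e h) * (w g * w h) := by rw [hχ_pow]
      _ = zp (e g) * zp (χ g * e h) * (w g * w h) := by rw [hχw]
    exact (huniq _ _ _ _ (hwV _) (mul_mem (hwV g) (hwV h)) hgh).1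
  -- summation over cosets of P in U
  set Pb : Subgroup ↥U := P.subgroupOf U with hPbdef
  haveI : Fintype (↥U ⧸ Pb) := Fintype.ofFinite _
  have hfwd : ∀ (u v : ↥U), @Setoid.r _ (QuotientGroup.leftRel Pb) u v → e (u : G) = e (v : G) := by
    intro u v huv
    rw [QuotientGroup.leftRel_apply] at huv
    have h2 : ((u⁻¹ * v : ↥U) : G) ∈ V := hPV (Subgroup.mem_subgroupOf.mp huv)
    have h1 : (v : G) = (u : G) * ((u⁻¹ * v : ↥U) : G) := by push_cast; group
    calc e (u : G) = e (u : G) + χ (u : G) * e (((u⁻¹ * v : ↥U)) : G) := by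
          rw [he_V _ h2, mul_zero, add_zero]
    _ = e ((u : G) * ((u⁻¹ * v : ↥U) : G)) := (he_mul _ _).symm
    _ = e (v : G) := by rw [← h1]
  set f : ↥U ⧸ Pb → ZMod p := fun c => Quotient.liftOn' c (fun u => e (u : G)) hfwd with hf
  set S : ZMod p := ∑ c : ↥U ⧸ Pb, f c with hS
  have hsmul : ∀ (v : ↥U) (c : ↥U ⧸ Pb), f (v • c) = e (v : G) + χ (v : G) * f c := by
    intro v c
    refine QuotientGroup.induction_on c (fun u => ?_)
    have h1 : (v • ((u : ↥U ⧸ Pb)) : ↥U ⧸ Pb) = ((v * u : ↥U) : ↥U ⧸ Pb) := by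
      rw [MulAction.Quotient.smul_mk, smul_eq_mul]
    rw [h1]
    show e ((v * u : ↥U) : G) = e (v : G) + χ (v : G) * e (u : G)
    push_cast
    rw [he_mul]
  have hcardq : (Fintype.card (↥U ⧸ Pb)) = P.relIndex U := by
    rw [← Nat.card_eq_fintype_card]
    rfl
  have hkey : ∀ v : ↥U, ((P.relIndex U : ℕ) : ZMod p) * e (v : G) + χ (v : G) * S = S := by
    intro v
    have h1 : ∑ c : ↥U ⧸ Pb, f (v • c) = S := by
      rw [hS]
      exact Equiv.sum_comp (MulAction.toPerm v) f
    have h2 : ∑ c : ↥U ⧸ Pb, f (v • c)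
        = (Fintype.card (↥U ⧸ Pb)) • (e (v : G)) + χ (v : G) * S := by
      simp only [hsmul]
      rw [Finset.sum_add_distrib, Finset.sum_const, ← Finset.mul_sum, Finset.card_univ, hS]
    rw [h2, hcardq, nsmul_eq_mul] at h1
    exact h1
  have hn : ((P.relIndex U : ℕ) : ZMod p) ≠ 0 := by
    rw [Ne, ZMod.natCast_eq_zero_iff]; exact hm
  set c₀ : ZMod p := ((P.relIndex U : ℕ) : ZMod p)⁻¹ * S with hc₀
  have he_formula : ∀ v : ↥U, e (v : G) = (1 - χ (v : G)) * c₀ := by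
    intro v
    have h1 := hkey v
    have h2 : ((P.relIndex U : ℕ) : ZMod p) * e (v : G) = (1 - χ (v : G)) * S := by
      linear_combination h1
    have h3 : e (v : G)
        = ((P.relIndex U : ℕ) : ZMod p)⁻¹ * (((P.relIndex U : ℕ) : ZMod p) * e (v : G)) := by
      rw [← mul_assoc, inv_mul_cancel₀ hn, one_mul]
    rw [h3, h2, hc₀]; ring
  refine ⟨zp (-c₀), hzp_mem _, ?_⟩
  have hainv : (zp (-c₀))⁻¹ = zp c₀ := by rw [hzp_inv, neg_neg]
  have hconjmem : ∀ u ∈ U, zp (-c₀) * u * (zp (-c₀))⁻¹ ∈ V := by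
    intro u hu
    have hcalc : zp (-c₀) * u * (zp (-c₀))⁻¹ = zp (-c₀ + e u + χ (w u) * c₀) * w u := by
      rw [hainv]
      calc zp (-c₀) * u * zp c₀ = zp (-c₀) * (zp (e u) * w u) * zp c₀ := by rw [← hgdec u]
      _ = (zp (-c₀) * zp (e u)) * (w u * zp c₀ * (w u)⁻¹) * w u := by group
      _ = (zp (-c₀) * zp (e u)) * zp (χ (w u) * c₀) * w u := by rw [hχ_pow]
      _ = zp (-c₀ + e u + χ (w u) * c₀) * w u := by rw [← hzp_add, ← hzp_add]
    have hexp : -c₀ + e u + χ (w u) * c₀ = 0 := by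
      rw [hχw, he_formula ⟨u, hu⟩]
      ring
    rw [hcalc, hexp, hzp_zero, one_mul]
    exact hwV u
  have hle : Subgroup.map (MulAut.conj (zp (-c₀))).toMonoidHom U ≤ V := by
    rintro x ⟨u, hu, rfl⟩
    simpa [MulAut.conj_apply] using hconjmem u hu
  apply Subgroup.eq_of_le_of_card_ge hle
  have hcmap : Nat.card (Subgroup.map (MulAut.conj (zp (-c₀))).toMonoidHom U) = Nat.card U :=
    (Nat.card_congr (Subgroup.equivMapOfInjective U _ (MulAut.conj (zp (-c₀))).injective).toEquiv).symm
  rw [hcmap, hUV]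

set_option maxHeartbeats 1000000 in
lemma case_not_le {G : Type*} [Group G] [Finite G] {p : ℕ} (hp : p.Prime)
    (A U V : Subgroup G) [hAn : A.Normal]
    (hAcomm : ∀ x ∈ A, ∀ y ∈ A, x * y = y * x)
    (hAmin : ∀ B : Subgroup G, B.Normal → B ≤ A → B = ⊥ ∨ B = A)
    (hAU : ¬ A ≤ U)
    (hUi : U.index = p) (hVi : V.index = p)
    (h : U.SylowConjugate V) : U.IsConjugate V := by
  haveI : Fact p.Prime := ⟨hp⟩
  have hsupgen : ∀ W : Subgroup G, W.index = p → ¬ A ≤ W → A ⊔ W = ⊤ := by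
    intro W hWi hAW
    have hdvd : (A ⊔ W).index ∣ p := hWi ▸ Subgroup.index_dvd_of_le le_sup_right
    rcases hp.eq_one_or_self_of_dvd _ hdvd with h1 | h1
    · exact Subgroup.index_eq_one.mp h1
    · exfalso
      apply hAW
      have hWsup : W = A ⊔ W := by
        apply Subgroup.eq_of_le_of_card_ge le_sup_right
        have e1 := (A ⊔ W).card_mul_index
        have e2 := W.card_mul_index
        rw [h1] at e1; rw [hWi] at e2
        exact le_of_eq (Nat.eq_of_mul_eq_mul_right hp.pos (e1.trans e2.symm))
      exact hWsup ▸ le_sup_left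
  have hinfgen : ∀ W : Subgroup G, W.index = p → ¬ A ≤ W → A ⊓ W = ⊥ := by
    intro W hWi hAW
    have hnormal : (A ⊓ W).Normal := by
      constructor
      intro x hx g
      have hg : g ∈ (↑(A ⊔ W) : Set G) := by rw [hsupgen W hWi hAW]; trivial
      rw [Subgroup.normal_mul] at hg
      obtain ⟨a, ha, u, hu, rfl⟩ := hg
      have hx1 : u * x * u⁻¹ ∈ A ⊓ W :=
        Subgroup.mem_inf.mpr ⟨hAn.conj_mem _ (Subgroup.mem_inf.mp hx).1 u,
          mul_mem (mul_mem hu (Subgroup.mem_inf.mp hx).2) (inv_mem hu)⟩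
      have heq : (a * u) * x * (a * u)⁻¹ = a * (u * x * u⁻¹) * a⁻¹ := by group
      rw [heq]
      have hmem : u * x * u⁻¹ ∈ A := (Subgroup.mem_inf.mp hx1).1
      have hcm : a * (u * x * u⁻¹) * a⁻¹ = u * x * u⁻¹ := by
        rw [hAcomm a ha _ hmem]; group
      rw [hcm]; exact hx1
    rcases hAmin (A ⊓ W) hnormal inf_le_left with h1 | h1
    · exact h1
    · exact absurd (by rw [← h1]; exact inf_le_right) hAW
  have hAUbot : A ⊓ U = ⊥ := hinfgen U hUi hAU
  have hAtop : A ⊔ U = ⊤ := hsupgen U hUi hAU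
  have hcardA : Nat.card A = p := by
    have hcompl : Subgroup.IsComplement' A U := by
      apply Subgroup.isComplement'_of_disjoint_and_mul_eq_univ
      · exact disjoint_iff.mpr hAUbot
      · rw [← Subgroup.normal_mul, hAtop, Subgroup.coe_top]
    have h2 := hcompl.index_eq_card
    rw [hUi] at h2; exact h2.symm
  have hAV : A ⊓ V = ⊥ := by
    by_cases hAVle : A ≤ V
    · exfalso
      obtain ⟨P, Q, g, hg⟩ := h p hp
      set A' : Subgroup ↥V := A.subgroupOf V with hA'
      have hA'card : Nat.card A' = p := by
        rw [← hcardA]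
        exact Nat.card_congr (Subgroup.subgroupOfEquivOfLe hAVle).toEquiv
      have hA'p : IsPGroup p A' := IsPGroup.of_card (by rw [hA'card, pow_one])
      haveI hA'n : A'.Normal := by
        constructor
        intro x hx v
        rw [Subgroup.mem_subgroupOf] at hx ⊢
        push_cast
        exact hAn.conj_mem _ hx v
      have hA'le : A' ≤ (Q : Subgroup ↥V) := by
        have hsup' : IsPGroup p ((A' ⊔ (Q : Subgroup ↥V) : Subgroup ↥V)) :=
          IsPGroup.to_sup_of_normal_left hA'p Q.2
        have h3 := Q.3 hsup' le_sup_right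
        rw [← h3]; exact le_sup_left
      have hAQ : A ≤ (Q : Subgroup ↥V).map V.subtype := by
        have h1 : A'.map V.subtype = A := by
          rw [hA', Subgroup.subgroupOf_map_subtype, inf_of_le_left hAVle]
        rw [← h1]; exact Subgroup.map_mono hA'le
      rw [← hg] at hAQ
      have h2 : A ≤ (P : Subgroup ↥U).map U.subtype := by
        have h3 := Subgroup.map_mono (f := (MulAut.conj g⁻¹).toMonoidHom) hAQ
        rw [map_conj_normal, map_conj_map_conj, inv_mul_cancel, map_conj_one] at h3
        exact h3
      exact hAU (h2.trans (Subgroup.map_subtype_le _))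
    · exact hinfgen V hVi hAVle
  obtain ⟨P, Q, g, hg⟩ := h p hp
  set U₁ := Subgroup.map (MulAut.conj g).toMonoidHom U with hU₁
  set P₁ := (Q : Subgroup ↥V).map V.subtype with hP₁
  have hker : (MulAut.conj g).toMonoidHom.ker = ⊥ :=
    MonoidHom.ker_eq_bot_iff _ |>.mpr (MulAut.conj g).injective
  have hU₁i : U₁.index = p := by
    rw [hU₁, Subgroup.index_map_eq _ (MulAut.conj g).surjective (by rw [hker]; exact bot_le)]
    exact hUi
  have hP₁U₁ : P₁ ≤ U₁ := by
    rw [← hg, hU₁]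
    exact Subgroup.map_mono (Subgroup.map_subtype_le _)
  have hP₁V : P₁ ≤ V := Subgroup.map_subtype_le _
  haveI : (Q : Subgroup ↥V).FiniteIndex := ⟨Subgroup.index_ne_zero_of_finite⟩
  have hQidx : ¬ p ∣ (Q : Subgroup ↥V).index := Q.not_dvd_index
  have hrel : P₁.relIndex U₁ = (Q : Subgroup ↥V).index := by
    have h1 : P₁.relIndex U₁ * U₁.index = P₁.index := Subgroup.relIndex_mul_index hP₁U₁
    have h2 : P₁.index = (Q : Subgroup ↥V).index * V.index := Subgroup.index_map_subtype _
    rw [hU₁i, h2, hVi] at h1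
    exact Nat.eq_of_mul_eq_mul_right hp.pos h1
  have hAU₁ : A ⊓ U₁ = ⊥ := by
    have h1 := Subgroup.map_inf A U (MulAut.conj g).toMonoidHom (MulAut.conj g).injective
    rw [hAUbot, Subgroup.map_bot, map_conj_normal A g] at h1
    exact h1.symm
  obtain ⟨a, ha, haeq⟩ := conj_complement hp A U₁ V P₁ hcardA hAcomm hAV hU₁i hVi hP₁U₁ hP₁V
    (by rw [hrel]; exact hQidx)
  exact ⟨a * g, by rw [← map_conj_map_conj, ← hU₁, haeq]⟩

open scoped commutatorElement in
lemma exists_min_abelian_normal (G : Type*) [Group G] [Finite G] [Group.IsSolvable G] [Nontrivial G] :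
    ∃ A : Subgroup G, A.Normal ∧ A ≠ ⊥ ∧ (∀ x ∈ A, ∀ y ∈ A, x * y = y * x) ∧
      ∀ B : Subgroup G, B.Normal → B ≤ A → B = ⊥ ∨ B = A := by
  -- a nontrivial abelian normal subgroup exists
  have hstart : ∃ A : Subgroup G, A.Normal ∧ A ≠ ⊥ ∧ (∀ x ∈ A, ∀ y ∈ A, x * y = y * x) := by
    obtain ⟨n, hn⟩ := Group.IsSolvable.solvable (G := G)
    have hex : ∃ n, derivedSeries G n = ⊥ := ⟨n, hn⟩
    classical
    have hmeq : derivedSeries G (Nat.find hex) = ⊥ := Nat.find_spec hex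
    have hm0 : Nat.find hex ≠ 0 := by
      intro h0
      rw [h0] at hmeq
      exact absurd hmeq (by simp [derivedSeries])
    obtain ⟨k, hk⟩ : ∃ k, Nat.find hex = k + 1 := ⟨Nat.find hex - 1, by omega⟩
    refine ⟨derivedSeries G k, derivedSeries_normal G k, ?_, ?_⟩
    · exact Nat.find_min hex (by omega)
    · intro x hx y hy
      have h1 : ⁅x, y⁆ ∈ derivedSeries G (k + 1) :=
        Subgroup.commutator_mem_commutator hx hy
      rw [← hk, hmeq, Subgroup.mem_bot] at h1
      exact commutatorElement_eq_one_iff_mul_comm.mp h1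
  -- take one of minimal cardinality
  obtain ⟨A₀, hA₀n, hA₀ne, hA₀c⟩ := hstart
  have hrec : ∀ (k : ℕ) (A : Subgroup G), Nat.card A ≤ k → A.Normal → A ≠ ⊥ →
      (∀ x ∈ A, ∀ y ∈ A, x * y = y * x) →
      ∃ A' : Subgroup G, A'.Normal ∧ A' ≠ ⊥ ∧ (∀ x ∈ A', ∀ y ∈ A', x * y = y * x) ∧
        ∀ B : Subgroup G, B.Normal → B ≤ A' → B = ⊥ ∨ B = A' := by
    intro k
    induction k with
    | zero =>
      intro A hcard _ _ _
      exact absurd hcard (by have : 0 < Nat.card A := Nat.card_pos; omega)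
    | succ k ih =>
      intro A hcard hn hne hc
      by_cases hmin : ∀ B : Subgroup G, B.Normal → B ≤ A → B = ⊥ ∨ B = A
      · exact ⟨A, hn, hne, hc, hmin⟩
      · push_neg at hmin
        obtain ⟨B, hBn, hBle, hBbot, hBA⟩ := hmin
        have hlt : Nat.card B < Nat.card A := by
          have hsub : (B : Set G) ⊂ (A : Set G) :=
            HasSubset.Subset.ssubset_of_ne hBle (by
              intro hEq
              exact hBA (SetLike.coe_injective hEq))
          have := Set.ncard_lt_ncard hsub (Set.toFinite _)
          rw [← Nat.card_coe_set_eq, ← Nat.card_coe_set_eq] at this; exact this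
        exact ih B (by omega) hBn hBbot (fun x hx y hy => hc x (hBle hx) y (hBle hy))
  exact hrec (Nat.card A₀) A₀ le_rfl hA₀n hA₀ne hA₀c

set_option maxHeartbeats 1000000 in
lemma key_solvable_conj (n : ℕ) : ∀ {G : Type*} [Group G] [Finite G] [Group.IsSolvable G]
    (U V : Subgroup G) {p : ℕ}, p.Prime → U.index = p → V.index = p → Nat.card G ≤ n →
    U.SylowConjugate V → U.IsConjugate V := by
  induction n with
  | zero =>
    intro G _ _ _ U V p hp hU hV hcard h
    exact absurd hcard (by have : 0 < Nat.card G := Nat.card_pos; omega)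
  | succ n ih =>
    intro G _ _ _ U V p hp hU hV hcard h
    haveI : Fact p.Prime := ⟨hp⟩
    haveI : Nontrivial G := by
      rcases subsingleton_or_nontrivial G with hs | hs
      · exfalso
        have htop : U = ⊤ := Subsingleton.elim _ _
        rw [htop, Subgroup.index_top] at hU
        have := hp.one_lt
        omega
      · exact hs
    obtain ⟨A, hAn, hAne, hAcomm, hAmin⟩ := exists_min_abelian_normal G
    haveI := hAn
    by_cases hAU : A ≤ U
    · by_cases hAV : A ≤ V
      · -- quotient case
        set π := QuotientGroup.mk' A with hπ
        have hπs : Function.Surjective π := QuotientGroup.mk'_surjective A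
        have hkerπ : π.ker = A := QuotientGroup.ker_mk' A
        have hUi' : (U.map π).index = p := by
          rw [Subgroup.index_map_eq _ hπs (by rw [hkerπ]; exact hAU)]; exact hU
        have hVi' : (V.map π).index = p := by
          rw [Subgroup.index_map_eq _ hπs (by rw [hkerπ]; exact hAV)]; exact hV
        have hcard' : Nat.card (G ⧸ A) ≤ n := by
          have h1 : Nat.card A * A.index = Nat.card G := A.card_mul_index
          have h2 : Nat.card (G ⧸ A) = A.index := (Subgroup.index_eq_card A).symm
          have h3 : 2 ≤ Nat.card A := by
            have hne1 : Nat.card A ≠ 1 := fun hone => hAne (Subgroup.card_eq_one.mp hone)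
            have : 0 < Nat.card A := Nat.card_pos
            omega
          have h4 : 0 < A.index := Nat.pos_of_ne_zero Subgroup.index_ne_zero_of_finite
          have h5 : 2 * A.index ≤ Nat.card G := by
            calc 2 * A.index ≤ Nat.card A * A.index := Nat.mul_le_mul_right _ h3
            _ = Nat.card G := h1
          omega
        have hSC : (U.map π).SylowConjugate (V.map π) := by
          intro q hq
          haveI : Fact q.Prime := ⟨hq⟩
          obtain ⟨P, Q, g, hg⟩ := h q hq
          refine ⟨P.mapSurjective (π.subgroupMap_surjective U),
            Q.mapSurjective (π.subgroupMap_surjective V), π g, ?_⟩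
          have hPmap : ((P.mapSurjective (π.subgroupMap_surjective U) :
                Subgroup ↥(U.map π))).map (U.map π).subtype
              = ((P : Subgroup ↥U).map U.subtype).map π := by
            rw [Sylow.coe_mapSurjective, Subgroup.map_map, Subgroup.map_map]
            congr 1
          have hQmap : ((Q.mapSurjective (π.subgroupMap_surjective V) :
                Subgroup ↥(V.map π))).map (V.map π).subtype
              = ((Q : Subgroup ↥V).map V.subtype).map π := by
            rw [Sylow.coe_mapSurjective, Subgroup.map_map, Subgroup.map_map]
            congr 1
          rw [hPmap, hQmap, map_map_conj_comm, hg]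
        obtain ⟨gq, hgq⟩ := ih (U.map π) (V.map π) hp hUi' hVi' hcard' hSC
        obtain ⟨g, rfl⟩ := hπs gq
        refine ⟨g, ?_⟩
        have h6 : (Subgroup.map (MulAut.conj g).toMonoidHom U).map π = V.map π := by
          rw [← map_map_conj_comm, hgq]
        have h7 : A ≤ Subgroup.map (MulAut.conj g).toMonoidHom U := by
          have h8 := Subgroup.map_mono (f := (MulAut.conj g).toMonoidHom) hAU
          rwa [map_conj_normal] at h8
        calc Subgroup.map (MulAut.conj g).toMonoidHom U
            = Subgroup.comap π ((Subgroup.map (MulAut.conj g).toMonoidHom U).map π) :=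
              (Subgroup.comap_map_eq_self (by rw [hkerπ]; exact h7)).symm
        _ = Subgroup.comap π (V.map π) := by rw [h6]
        _ = V := Subgroup.comap_map_eq_self (by rw [hkerπ]; exact hAV)
      · exact isConjugate_symm
          (case_not_le hp A V U hAcomm hAmin hAV hV hU (sylowConjugate_symm h))
    · exact case_not_le hp A U V hAcomm hAmin hAU hU hV h

theorem solvable_prime_degree_sylowConjugate_imp_isomorphic
    {M : Type*} [Field M] [NumberField M] [IsGalois ℚ M]
    [Group.IsSolvable (M ≃ₐ[ℚ] M)]
    (K L : IntermediateField ℚ M) {p : ℕ} (hp : p.Prime)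
    (hK : Module.finrank ℚ K = p) (hL : Module.finrank ℚ L = p)
    (h : Subgroup.SylowConjugate K.fixingSubgroup L.fixingSubgroup) :
    Nonempty (K ≃+* L) := by
  classical
  have hidx : ∀ E : IntermediateField ℚ M, Module.finrank ℚ E = p →
      E.fixingSubgroup.index = p := by
    intro E hE
    have h1 : Nat.card E.fixingSubgroup = Module.finrank E M := by
      rw [Nat.card_congr (IntermediateField.fixingSubgroupEquiv E).toEquiv]
      exact IsGalois.card_aut_eq_finrank E M
    have h2 : Nat.card (M ≃ₐ[ℚ] M) = Module.finrank ℚ M := by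
      exact IsGalois.card_aut_eq_finrank ℚ M
    have h3 := E.fixingSubgroup.card_mul_index
    rw [h1, h2] at h3
    have h4 : Module.finrank ℚ E * Module.finrank E M = Module.finrank ℚ M :=
      Module.finrank_mul_finrank ℚ E M
    rw [← h4, hE] at h3
    have h5 : 0 < Module.finrank E M := Module.finrank_pos
    have h6 : Module.finrank E M * E.fixingSubgroup.index
        = Module.finrank E M * p := by rw [h3, mul_comm]
    exact Nat.eq_of_mul_eq_mul_left h5 h6
  obtain ⟨σ, hσ⟩ := key_solvable_conj (Nat.card (M ≃ₐ[ℚ] M)) K.fixingSubgroup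
    L.fixingSubgroup hp (hidx K hK) (hidx L hL) le_rfl h
  have hKL : K.map (σ : M →ₐ[ℚ] M) = L := by
    have h1 : (K.map (σ : M →ₐ[ℚ] M)).fixingSubgroup = L.fixingSubgroup := by
      rw [IsGalois.map_fixingSubgroup, Subgroup.pointwise_smul_def, ← hσ]
      rfl
    have h4 := congrArg IntermediateField.fixedField h1
    rwa [IsGalois.fixedField_fixingSubgroup, IsGalois.fixedField_fixingSubgroup] at h4
  exact ⟨((IntermediateField.intermediateFieldMap σ K).trans
    (IntermediateField.equivOfEq hKL)).toRingEquiv⟩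
end

section
/- Let p be an odd prime and n = 2p. Fix bijections of the cyclic group C_{2p} of order 2p and of the dihedral group D_{2p} of order 2p with Fin n, and let U and V denote the images of C_{2p} and D_{2p} in the symmetric group Sym(Fin n) under the resulting left regular permutation representations. Then U and V are Sylow-conjugate subgroups of Sym(Fin n), but U and V are not Gassmann equivalent in Sym(Fin n): there exists a conjugacy class C of Sym(Fin n) with |C ∩ U| ≠ |C ∩ V|. -/
/-- The left regular permutation representation of a group `U`, relative to a
bijection `e : U ≃ α`: the homomorphism `U →* Equiv.Perm α` obtained by transporting
the action of `U` on itself by left multiplication along `e`. -/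
def regularRep {U α : Type*} [Group U] (e : U ≃ α) : U →* Equiv.Perm α where
  toFun u := (e.symm.trans (Equiv.mulLeft u)).trans e
  map_one' := by ext x; simp
  map_mul' u v := by ext x; simp [mul_assoc]

private lemma regularRep_injective {W α : Type*} [Group W] (e : W ≃ α) :
    Function.Injective (regularRep e) := by
  intro u v h
  have h1 := congrArg (fun f : Equiv.Perm α => e.symm (f (e 1))) h
  simpa [regularRep] using h1

private lemma regularRep_fpf {W α : Type*} [Group W] (e : W ≃ α) {u : W} (hu : u ≠ 1)
    (x : α) : regularRep e u x ≠ x := by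
  intro h
  apply hu
  have h1 : u * e.symm x = e.symm x := by
    have := congrArg e.symm h
    simpa [regularRep] using this
  simpa using mul_right_cancel (h1.trans (one_mul (e.symm x)).symm)

private lemma cycleType_of_prime_order {n q : ℕ} (hq : q.Prime) {σ : Equiv.Perm (Fin n)}
    (hsupp : σ.support = Finset.univ) (horder : orderOf σ = q) :
    σ.cycleType = Multiset.replicate (n / q) q := by
  have hall : ∀ m ∈ σ.cycleType, m = q := by
    intro m hm
    have h1 : m ∣ q := by
      rw [← horder, ← Equiv.Perm.lcm_cycleType]
      exact Multiset.dvd_lcm hm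
    have h2 := Equiv.Perm.two_le_of_mem_cycleType hm
    rcases hq.eq_one_or_self_of_dvd m h1 with h | h
    · omega
    · exact h
  have hrep : σ.cycleType = Multiset.replicate (Multiset.card σ.cycleType) q :=
    Multiset.eq_replicate_card.mpr hall
  have h3 : σ.cycleType.sum = n := by
    rw [Equiv.Perm.sum_cycleType, hsupp, Finset.card_univ, Fintype.card_fin]
  have hsum : Multiset.card σ.cycleType * q = n := by
    calc Multiset.card σ.cycleType * q
        = (Multiset.replicate (Multiset.card σ.cycleType) q).sum := by
          rw [Multiset.sum_replicate, smul_eq_mul]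
      _ = σ.cycleType.sum := by rw [← hrep]
      _ = n := h3
  rw [hrep]
  congr 1
  exact (Nat.div_eq_of_eq_mul_left hq.pos hsum.symm).symm

private lemma card_regularRep_range {W : Type*} [Group W] {n : ℕ} (e : W ≃ Fin n) :
    Nat.card (regularRep e).range = n := by
  rw [Nat.card_congr (MonoidHom.ofInjective (regularRep_injective e)).toEquiv.symm,
    Nat.card_congr e, Nat.card_eq_fintype_card, Fintype.card_fin]

private lemma sylow_map_eq_bot {W : Type*} [Group W] {n : ℕ} (e : W ≃ Fin n)
    {q : ℕ} (hq : q.Prime) [Fact q.Prime] (hfac : n.factorization q = 0)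
    (P : Sylow q (regularRep e).range) :
    ((P : Subgroup (regularRep e).range).map (regularRep e).range.subtype) = ⊥ := by
  have hcardP : Nat.card (P : Subgroup (regularRep e).range) = 1 := by
    rw [Sylow.card_eq_multiplicity, card_regularRep_range, hfac, pow_zero]
  rw [(Subgroup.eq_bot_iff_card (H := _)).mpr hcardP, Subgroup.map_bot]

private lemma sylow_map_eq_zpowers {W : Type*} [Group W] {n : ℕ} (e : W ≃ Fin n)
    {q : ℕ} (hq : q.Prime) [Fact q.Prime] (hfac : n.factorization q = 1)
    (P : Sylow q (regularRep e).range) :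
    ∃ σ : Equiv.Perm (Fin n),
      ((P : Subgroup (regularRep e).range).map (regularRep e).range.subtype) =
        Subgroup.zpowers σ ∧
      σ.cycleType = Multiset.replicate (n / q) q := by
  have hcardP : Nat.card (P : Subgroup (regularRep e).range) = q := by
    rw [Sylow.card_eq_multiplicity, card_regularRep_range, hfac, pow_one]
  have hcardP' : Nat.card ((P : Subgroup (regularRep e).range).map
      (regularRep e).range.subtype) = q :=
    (Nat.card_congr (Subgroup.equivMapOfInjective _ (regularRep e).range.subtype
      (regularRep e).range.subtype_injective).toEquiv.symm).trans hcardP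
  obtain ⟨σ, hσP, hσ1⟩ : ∃ x ∈ (P : Subgroup (regularRep e).range).map
      (regularRep e).range.subtype, x ≠ (1 : Equiv.Perm (Fin n)) := by
    rcases Subgroup.bot_or_exists_ne_one ((P : Subgroup (regularRep e).range).map
      (regularRep e).range.subtype) with h | h
    · exfalso
      rw [h, Subgroup.card_bot] at hcardP'
      exact hq.one_lt.ne' hcardP'.symm
    · exact h
  have hordσ : orderOf σ = q := by
    have hdvd : orderOf σ ∣ q := by
      rw [← hcardP']
      exact Subgroup.orderOf_dvd_natCard _ hσP
    rcases hq.eq_one_or_self_of_dvd _ hdvd with h | h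
    · exact absurd (orderOf_eq_one_iff.mp h) hσ1
    · exact h
  have hz : Subgroup.zpowers σ = (P : Subgroup (regularRep e).range).map
      (regularRep e).range.subtype := by
    apply Subgroup.eq_of_le_of_card_ge (Subgroup.zpowers_le.mpr hσP)
    rw [hcardP', Nat.card_zpowers, hordσ]
  have hσH : σ ∈ (regularRep e).range := Subgroup.map_subtype_le _ hσP
  obtain ⟨u, hu⟩ := hσH
  have hu1 : u ≠ 1 := by
    rintro rfl
    rw [map_one] at hu
    exact hσ1 hu.symm
  have hsupp : σ.support = Finset.univ :=
    Finset.eq_univ_iff_forall.mpr fun x =>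
      Equiv.Perm.mem_support.mpr (hu ▸ regularRep_fpf e hu1 x)
  exact ⟨σ, hz.symm, cycleType_of_prime_order hq hsupp hordσ⟩

private lemma isConjugate_zpowers {G : Type*} [Group G] {σ τ : G} (h : IsConj σ τ) :
    Subgroup.IsConjugate (Subgroup.zpowers σ) (Subgroup.zpowers τ) := by
  obtain ⟨c, hc⟩ := isConj_iff.mp h
  refine ⟨c, ?_⟩
  have hcτ : (MulAut.conj c).toMonoidHom σ = τ := by
    simpa [MulAut.conj_apply] using hc
  rw [MonoidHom.map_zpowers, hcτ]

/-- For an odd prime `p`, the images of the cyclic group of order `2p` and the dihedral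
group of order `2p` in `Sym(Fin 2p)` under (any) left regular permutation representations
are Sylow-conjugate, but not Gassmann equivalent: some conjugacy class of `Sym(Fin 2p)`
meets them in sets of different sizes. -/
theorem cyclic_dihedral_regular_sylowConjugate_not_gassmann
    {p : ℕ} (hp : p.Prime) (hodd : Odd p)
    (eU : Multiplicative (ZMod (2 * p)) ≃ Fin (2 * p))
    (eV : DihedralGroup p ≃ Fin (2 * p)) :
    Subgroup.SylowConjugate (regularRep eU).range (regularRep eV).range ∧
      ∃ σ : Equiv.Perm (Fin (2 * p)),
        Nat.card {x : Equiv.Perm (Fin (2 * p)) //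
            IsConj σ x ∧ x ∈ (regularRep eU).range} ≠
          Nat.card {x : Equiv.Perm (Fin (2 * p)) //
            IsConj σ x ∧ x ∈ (regularRep eV).range} := by
  have hp2 : p ≠ 2 := by
    rintro rfl
    exact absurd (Nat.odd_iff.mp hodd) (by norm_num)
  have hpne : p ≠ 0 := hp.pos.ne'
  have hfac2 : (2 * p).factorization 2 = 1 := by
    rw [Nat.factorization_mul two_ne_zero hpne, Nat.Prime.factorization Nat.prime_two,
      Nat.Prime.factorization hp]
    simp [Finsupp.add_apply, Finsupp.single_apply, hp2]
  have hfacp : (2 * p).factorization p = 1 := by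
    rw [Nat.factorization_mul two_ne_zero hpne, Nat.Prime.factorization Nat.prime_two,
      Nat.Prime.factorization hp]
    simp [Finsupp.add_apply, Finsupp.single_apply, Ne.symm hp2]
  constructor
  · intro q hq
    haveI : Fact q.Prime := ⟨hq⟩
    by_cases hdvd : q ∣ 2 * p
    · have hfac : (2 * p).factorization q = 1 := by
        rcases (Nat.Prime.dvd_mul hq).mp hdvd with h | h
        · rw [(Nat.prime_dvd_prime_iff_eq hq Nat.prime_two).mp h]
          exact hfac2
        · rw [(Nat.prime_dvd_prime_iff_eq hq hp).mp h]
          exact hfacp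
      obtain ⟨P⟩ : Nonempty (Sylow q (regularRep eU).range) := inferInstance
      obtain ⟨Q⟩ : Nonempty (Sylow q (regularRep eV).range) := inferInstance
      obtain ⟨σ, hσ, hσct⟩ := sylow_map_eq_zpowers eU hq hfac P
      obtain ⟨τ, hτ, hτct⟩ := sylow_map_eq_zpowers eV hq hfac Q
      refine ⟨P, Q, ?_⟩
      rw [hσ, hτ]
      exact isConjugate_zpowers
        (Equiv.Perm.isConj_iff_cycleType_eq.mpr (hσct.trans hτct.symm))
    · have hfac : (2 * p).factorization q = 0 :=
        Nat.factorization_eq_zero_of_not_dvd hdvd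
      obtain ⟨P⟩ : Nonempty (Sylow q (regularRep eU).range) := inferInstance
      obtain ⟨Q⟩ : Nonempty (Sylow q (regularRep eV).range) := inferInstance
      refine ⟨P, Q, 1, ?_⟩
      rw [sylow_map_eq_bot eU hq hfac P, sylow_map_eq_bot eV hq hfac Q,
        Subgroup.map_bot]
  · haveI : NeZero p := ⟨hpne⟩
    set σ0 := regularRep eU (Multiplicative.ofAdd (1 : ZMod (2 * p))) with hσ0
    refine ⟨σ0, ?_⟩
    have hord : orderOf σ0 = 2 * p := by
      rw [hσ0, orderOf_injective _ (regularRep_injective eU),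
        orderOf_ofAdd_eq_addOrderOf, ZMod.addOrderOf_one]
    haveI hV : IsEmpty {x : Equiv.Perm (Fin (2 * p)) //
        IsConj σ0 x ∧ x ∈ (regularRep eV).range} := by
      refine ⟨fun ⟨x, hconj, hmem⟩ => ?_⟩
      obtain ⟨d, rfl⟩ := hmem
      have hx : orderOf (regularRep eV d) = 2 * p := by
        obtain ⟨c, hc⟩ := isConj_iff.mp hconj
        rw [← hc]
        have h2 : orderOf (c * σ0 * c⁻¹) = orderOf σ0 := by
          have := orderOf_injective (MulAut.conj c).toMonoidHom
            (MulAut.conj c).injective σ0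
          simpa [MulAut.conj_apply] using this
        exact h2.trans hord
      rw [orderOf_injective _ (regularRep_injective eV)] at hx
      cases d with
      | r i =>
        have hdvd : orderOf (DihedralGroup.r i) ∣ p := by
          rw [DihedralGroup.orderOf_r]
          exact Nat.div_dvd_of_dvd (Nat.gcd_dvd_left _ _)
        rw [hx] at hdvd
        have := Nat.le_of_dvd hp.pos hdvd
        omega
      | sr i =>
        rw [DihedralGroup.orderOf_sr] at hx
        have := hp.two_le
        omega
    haveI hU : Nonempty {x : Equiv.Perm (Fin (2 * p)) //
        IsConj σ0 x ∧ x ∈ (regularRep eU).range} :=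
      ⟨⟨σ0, IsConj.refl σ0, ⟨_, rfl⟩⟩⟩
    have h0 : Nat.card {x : Equiv.Perm (Fin (2 * p)) //
        IsConj σ0 x ∧ x ∈ (regularRep eV).range} = 0 := Nat.card_of_isEmpty
    rw [h0]
    exact Nat.card_pos.ne'
end
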